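/- arXiv:2404.06610 — 2 statements merged into one kernel-verified Lean document; each statement's English description precedes it below -/
import Mathlib

section
/- Let C be a cochain complex of modules over a commutative ring with an ascending exhaustive filtration F_n C (n ∈ ℕ) such that F_0 C = 0 and for every n > 1 the complex gr_n C = F_n C / F_{n-1}C is acyclic. Then the inclusion F_1 C ↪ C is a quasi-isomorphism. (No splitting hypothesis on the filtration is needed.) -/
open CategoryTheory

variable {R : Type} [CommRing R]

/-- A family of submodules of the components of a cochain complex is stable under the
differential. -/
def dStable (C : CochainComplex (ModuleCat R) ℤ) (F : ∀ i : ℤ, Submodule R (C.X i)) : Prop :=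
  ∀ (i j : ℤ), ∀ x ∈ F i, C.d i j x ∈ F j

/-- The subcomplex of a cochain complex determined by a `d`-stable family of
submodules. -/
noncomputable def subcomplex (C : CochainComplex (ModuleCat R) ℤ)
    (F : ∀ i : ℤ, Submodule R (C.X i)) (hF : dStable C F) :
    CochainComplex (ModuleCat R) ℤ :=
  CochainComplex.of (fun i => ModuleCat.of R (F i))
    (fun i => ModuleCat.ofHom ((C.d i (i + 1)).hom.restrict (fun x hx => hF i (i + 1) x hx)))
    (fun i => by
      ext x
      have h := congrArg (fun f => f.hom x.1) (C.d_comp_d i (i + 1) (i + 1 + 1))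
      simp only [ModuleCat.hom_comp, LinearMap.comp_apply, ModuleCat.hom_zero,
        LinearMap.zero_apply] at h
      simpa [LinearMap.restrict_coe_apply] using h)

/-- The inclusion of a subcomplex into the ambient complex. -/
noncomputable def subcomplexIncl (C : CochainComplex (ModuleCat R) ℤ)
    (F : ∀ i : ℤ, Submodule R (C.X i)) (hF : dStable C F) :
    subcomplex C F hF ⟶ C where
  f i := ModuleCat.ofHom (F i).subtype
  comm' := by
    rintro i j (rfl : i + 1 = j)
    ext x
    simp only [subcomplex, CochainComplex.of_d]
    rfl

/-- The quotient complex `F/G` of two `d`-stable families of submodules; when `G ≤ F`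
this is the quotient of the subcomplex determined by `F` by the subcomplex determined
by `G`. -/
noncomputable def grQuot (C : CochainComplex (ModuleCat R) ℤ)
    (F G : ∀ i : ℤ, Submodule R (C.X i)) (hF : dStable C F) (hG : dStable C G) :
    CochainComplex (ModuleCat R) ℤ :=
  CochainComplex.of
    (fun i => ModuleCat.of R ((F i) ⧸ ((G i).comap (F i).subtype)))
    (fun i => ModuleCat.ofHom (Submodule.mapQ _ _
      ((C.d i (i + 1)).hom.restrict (fun x hx => hF i (i + 1) x hx))
      (fun x hx => by
        simpa [Submodule.mem_comap, LinearMap.restrict_apply] using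
          hG i (i + 1) x.1 hx)))
    (fun i => by
      ext y
      have h := congrArg (fun f => f.hom y.1) (C.d_comp_d i (i + 1) (i + 1 + 1))
      simp only [ModuleCat.hom_comp, LinearMap.comp_apply, ModuleCat.hom_zero,
        LinearMap.zero_apply] at h
      simp [Submodule.mapQ_apply, Submodule.Quotient.mk_eq_zero, Submodule.mem_comap,
        LinearMap.restrict_apply, h])

/-!
The inclusion of a subcomplex `F ⊆ C` is a quasi-isomorphism as soon as every cochain whose
coboundary lies in `F` is cohomologous to a cochain in `F`. For `F = F₁` this follows by
induction on the filtration degree: if `x ∈ Fₙ` with `dx ∈ F₁ ⊆ Fₙ₋₁` and `n > 1`, exactness of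
`grₙ C` gives `v ∈ Fₙ` with `x - dv ∈ Fₙ₋₁`, and `x - dv` still has coboundary `dx ∈ F₁`.
Exhaustiveness puts every cochain in some `Fₙ`.
-/

namespace CategoryTheory.ShortComplex

lemma quasiIso_of_moduleCat_elementwise {S₁ S₂ : ShortComplex (ModuleCat R)} (φ : S₁ ⟶ S₂)
    (hsurj : ∀ x : S₂.X₂, S₂.g x = 0 →
      ∃ (y : S₁.X₂) (z : S₂.X₁), S₁.g y = 0 ∧ x = φ.τ₂ y + S₂.f z)
    (hinj : ∀ y : S₁.X₂, S₁.g y = 0 → (∃ z, S₂.f z = φ.τ₂ y) → ∃ w, S₁.f w = y) :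
    QuasiIso φ := by
  set h₁ := S₁.moduleCatLeftHomologyData
  set h₂ := S₂.moduleCatLeftHomologyData
  rw [quasiIso_iff_isIso_leftHomologyMap' φ h₁ h₂, ConcreteCategory.isIso_iff_bijective]
  have hπ (k : LinearMap.ker S₁.g.hom) :
      leftHomologyMap' φ h₁ h₂ (h₁.π k) = h₂.π (cyclesMap' φ h₁ h₂ k) :=
    congr($(leftHomologyπ_naturality' φ h₁ h₂) k)
  have hi (k : LinearMap.ker S₁.g.hom) : (cyclesMap' φ h₁ h₂ k).1 = φ.τ₂ k.1 :=
    congr($(cyclesMap'_i φ h₁ h₂) k)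
  constructor
  · rw [injective_iff_map_eq_zero]
    intro a ha
    obtain ⟨k, rfl⟩ := Submodule.Quotient.mk_surjective _ a
    change leftHomologyMap' φ h₁ h₂ (h₁.π k) = 0 at ha
    rw [hπ] at ha
    obtain ⟨z, hz⟩ := (Submodule.Quotient.mk_eq_zero _).1 ha
    obtain ⟨w, hw⟩ := hinj k.1 k.2 ⟨z, congr_arg Subtype.val hz |>.trans (hi k)⟩
    exact (Submodule.Quotient.mk_eq_zero _).2 ⟨w, Subtype.ext hw⟩
  · intro b
    obtain ⟨x, rfl⟩ := Submodule.Quotient.mk_surjective _ b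
    obtain ⟨y, z, hy, hxyz⟩ := hsurj x.1 x.2
    let k : LinearMap.ker S₁.g.hom := ⟨y, hy⟩
    refine ⟨h₁.π k, ?_⟩
    rw [hπ]
    refine (Submodule.Quotient.eq _).2 ⟨-z, Subtype.ext ?_⟩
    change S₂.f (-z) = (cyclesMap' φ h₁ h₂ k).1 - x.1
    rw [map_neg, hi, hxyz]
    abel

end CategoryTheory.ShortComplex

@[simp]
lemma HomologicalComplex.d_comp_d_apply {ι : Type*} {c : ComplexShape ι}
    (C : HomologicalComplex (ModuleCat R) c) (i j k : ι) (x : C.X i) :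
    C.d j k (C.d i j x) = 0 :=
  congr($(C.d_comp_d i j k) x)

lemma subcomplex_d_apply (C : CochainComplex (ModuleCat R) ℤ)
    (F : ∀ i : ℤ, Submodule R (C.X i)) (hF : dStable C F) (i j : ℤ)
    (x : (subcomplex C F hF).X i) :
    ((subcomplex C F hF).d i j x).1 = C.d i j x.1 :=
  congr($((subcomplexIncl C F hF).comm i j) x).symm

lemma quasiIso_subcomplexIncl_of_exists_sub_d_mem (C : CochainComplex (ModuleCat R) ℤ)
    (F : ∀ i : ℤ, Submodule R (C.X i)) (hF : dStable C F)
    (hrep : ∀ i j k : ℤ, i + 1 = j → j + 1 = k → ∀ x : C.X j, C.d j k x ∈ F k →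
      ∃ z : C.X i, x - C.d i j z ∈ F j) :
    QuasiIso (subcomplexIncl C F hF) := by
  refine ⟨fun j => ?_⟩
  rw [quasiIsoAt_iff' _ (j - 1) j (j + 1) (by simp) (by simp)]
  apply ShortComplex.quasiIso_of_moduleCat_elementwise
  · intro (x : C.X j) (hx : C.d j (j + 1) x = 0)
    obtain ⟨z, hz⟩ := hrep (j - 1) j (j + 1) (by omega) rfl x (hx ▸ zero_mem _)
    refine ⟨⟨_, hz⟩, z, Subtype.ext ((subcomplex_d_apply C F hF _ _ _).trans ?_),
      (sub_add_cancel _ _).symm⟩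
    simp only [map_sub, hx, HomologicalComplex.d_comp_d_apply, sub_zero]
    rfl
  · rintro ⟨y, hy⟩ - ⟨(z : C.X (j - 1)), (hz : C.d (j - 1) j z = y)⟩
    obtain ⟨w, hw⟩ := hrep (j - 1 - 1) (j - 1) j (by omega) (by omega) z (hz ▸ hy)
    refine ⟨⟨_, hw⟩, Subtype.ext ((subcomplex_d_apply C F hF _ _ _).trans ?_)⟩
    simpa using hz

lemma grQuot_d_mk (C : CochainComplex (ModuleCat R) ℤ)
    (F G : ∀ i : ℤ, Submodule R (C.X i)) (hF : dStable C F) (hG : dStable C G) (i : ℤ)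
    (x : F i) :
    (grQuot C F G hF hG).d i (i + 1) (Submodule.Quotient.mk x) =
      Submodule.Quotient.mk ⟨C.d i (i + 1) x, hF i (i + 1) x x.2⟩ := by
  simp only [grQuot, CochainComplex.of_d]
  rfl

lemma exists_sub_d_mem_of_grQuot_exactAt {C : CochainComplex (ModuleCat R) ℤ}
    {F G : ∀ i : ℤ, Submodule R (C.X i)} {hF : dStable C F} {hG : dStable C G} {i j k : ℤ}
    (hij : i + 1 = j) (hjk : j + 1 = k) (hexact : (grQuot C F G hF hG).ExactAt j)
    {x : C.X j} (hx : x ∈ F j) (hdx : C.d j k x ∈ G k) :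
    ∃ v ∈ F i, x - C.d i j v ∈ G j := by
  subst hij hjk
  rw [HomologicalComplex.exactAt_iff' _ i (i + 1) (i + 1 + 1) (by simp) (by simp),
    ShortComplex.moduleCat_exact_iff] at hexact
  obtain ⟨q, hq⟩ := hexact (Submodule.Quotient.mk ⟨x, hx⟩)
    ((grQuot_d_mk C F G hF hG _ _).trans ((Submodule.Quotient.mk_eq_zero _).2 hdx))
  obtain ⟨v, rfl⟩ := Submodule.Quotient.mk_surjective _ q
  have hmem := (Submodule.Quotient.eq _).1 ((grQuot_d_mk C F G hF hG _ _).symm.trans hq)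
  exact ⟨v, v.2, by simpa using neg_mem hmem⟩

lemma exists_sub_d_mem_one_of_mem_filtration (C : CochainComplex (ModuleCat R) ℤ)
    {F : ℕ → ∀ i : ℤ, Submodule R (C.X i)} (hstab : ∀ n, dStable C (F n))
    (hmono : ∀ i, Monotone (F · i))
    (hacyclic : ∀ n : ℕ, 1 < n → ∀ i : ℤ,
      (grQuot C (F n) (F (n - 1)) (hstab n) (hstab (n - 1))).ExactAt i)
    {i j k : ℤ} (hij : i + 1 = j) (hjk : j + 1 = k) {n : ℕ} {x : C.X j} (hx : x ∈ F n j)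
    (hdx : C.d j k x ∈ F 1 k) :
    ∃ z : C.X i, x - C.d i j z ∈ F 1 j := by
  induction n generalizing x with
  | zero => exact ⟨0, by simpa using hmono j zero_le_one hx⟩
  | succ n ih =>
    rcases Nat.eq_zero_or_pos n with rfl | hn
    · exact ⟨0, by simpa using hx⟩
    obtain ⟨v, -, hv⟩ := exists_sub_d_mem_of_grQuot_exactAt hij hjk
      (hacyclic (n + 1) (by omega) j) hx (hmono k hn hdx)
    obtain ⟨z, hz⟩ := ih hv (by simpa using hdx)
    exact ⟨v + z, by rwa [map_add, ← sub_sub]⟩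

theorem incl_filtration_one_quasiIso_general
    (C : CochainComplex (ModuleCat R) ℤ)
    (F : ℕ → ∀ i : ℤ, Submodule R (C.X i))
    -- each `F n` is a subcomplex
    (hstab : ∀ n : ℕ, dStable C (F n))
    -- the filtration is ascending
    (hmono : ∀ (n : ℕ) (i : ℤ), F n i ≤ F (n + 1) i)
    -- the filtration is exhaustive
    (hexh : ∀ i : ℤ, (⨆ n : ℕ, F n i) = ⊤)
    -- for `n > 1`, the quotient complex `gr_n C = F_n C / F_{n-1} C` is acyclic
    (hacyclic : ∀ n : ℕ, 1 < n → ∀ i : ℤ,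
      (grQuot C (F n) (F (n - 1)) (hstab n) (hstab (n - 1))).ExactAt i) :
    QuasiIso (subcomplexIncl C (F 1) (hstab 1)) := by
  have hmono' (i : ℤ) : Monotone (F · i) := monotone_nat_of_le_succ (hmono · i)
  refine quasiIso_subcomplexIncl_of_exists_sub_d_mem C (F 1) (hstab 1)
    fun i j k hij hjk x hdx => ?_
  obtain ⟨n, hn⟩ := (Submodule.mem_iSup_of_directed _ (hmono' j).directed_le).1
    (hexh j ▸ Submodule.mem_top)
  exact exists_sub_d_mem_one_of_mem_filtration C hstab hmono' hacyclic hij hjk hn hdx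

/-- Let `C` be a cochain complex of `R`-modules with an ascending exhaustive filtration
`F_n C` (`n ∈ ℕ`) with `F_0 C = 0`, such that for every `n > 1` the quotient complex
`gr_n C = F_n C / F_{n-1} C` is acyclic.  Then the inclusion `F_1 C ↪ C` is a
quasi-isomorphism.  (No splitting hypothesis on the filtration is needed.) -/
theorem incl_filtration_one_quasiIso
    (C : CochainComplex (ModuleCat R) ℤ)
    (F : ℕ → ∀ i : ℤ, Submodule R (C.X i))
    -- each `F n` is a subcomplex
    (hstab : ∀ n : ℕ, dStable C (F n))
    -- the filtration is ascending
    (hmono : ∀ (n : ℕ) (i : ℤ), F n i ≤ F (n + 1) i)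
    -- the filtration is exhaustive
    (hexh : ∀ i : ℤ, (⨆ n : ℕ, F n i) = ⊤)
    -- `F 0 = 0`
    (hzero : ∀ i : ℤ, F 0 i = ⊥)
    -- for `n > 1`, the quotient complex `gr_n C = F_n C / F_{n-1} C` is acyclic
    (hacyclic : ∀ n : ℕ, 1 < n → ∀ i : ℤ,
      (grQuot C (F n) (F (n - 1)) (hstab n) (hstab (n - 1))).ExactAt i) :
    QuasiIso (subcomplexIncl C (F 1) (hstab 1)) :=
  incl_filtration_one_quasiIso_general C F hstab hmono hexh hacyclic
end

section
/- Let C' and C'' be cochain complexes with differentials d' and d'', let e: C'' → C' be a degree 1 map satisfying d'∘e = −e∘d'', and let C be the complex with underlying graded module C' ⊕ C'' and differential given in matrix form by [[d', e],[0, d'']]. Suppose there are: a chain map p': C' → D, a chain map i: D → C' with p'∘i = id_D, and a degree −1 map h': C' → C' with id_{C'} = i∘p' + d'∘h' + h'∘d'; and a degree −1 map h'': C'' → C'' with id_{C''} = d''∘h'' + h''∘d''. Then p := (p', −p'∘e∘h''): C → D is a chain map satisfying p∘(i,0) = id_D, and setting h := [[h', −h'∘e∘h''],[0, h'']]: C →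 C one has id_C = (i,0)∘p + d_C∘h + h∘d_C. In particular the inclusion (i,0): D → C exhibits D as a deformation retract of C. -/
/-!
Splitting `e b = e d'' h'' b + e h'' d'' b` by the contraction `h''` and using `d' e = - e d''`,
every identity reduces to the one for `h'` applied to `a` and to `E := e h'' b`: the correction
terms `- p' e h''`, `e h''` and `- h' e h''` are exactly what the `h'`-identity for `E` absorbs,
since `d' E = - e d'' h'' b`.
-/

open CategoryTheory

section ExtensionByContractible

lemma HomologicalComplex.Hom.f_d_apply {R : Type*} [Ring R] {ι : Type*} {c : ComplexShape ι}
    {X Y : HomologicalComplex (ModuleCat R) c} (f : X ⟶ Y) (i j : ι) (x : X.X i) :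
    f.f j (X.d i j x) = Y.d i j (f.f i x) :=
  (ConcreteCategory.congr_hom (f.comm i j) x).symm

variable {R : Type} [Ring R] {C' C'' D : CochainComplex (ModuleCat R) ℤ}
  {e : ∀ i j : ℤ, C''.X i →ₗ[R] C'.X j} {h' : ∀ i j : ℤ, C'.X i →ₗ[R] C'.X j}
  {h'' : ∀ i j : ℤ, C''.X i →ₗ[R] C''.X j}

lemma e_d_eq_neg_d_e
    (he : ∀ (i : ℤ) (x : C''.X i),
      C'.d (i + 1) (i + 2) (e i (i + 1) x) = - e (i + 1) (i + 2) (C''.d i (i + 1) x))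
    (n : ℤ) (x : C''.X (n - 1)) :
    e n (n + 1) (C''.d (n - 1) n x) = - C'.d n (n + 1) (e (n - 1) n x) := by
  have h := he (n - 1) x
  rw [sub_add_cancel, show n - 1 + 2 = n + 1 by ring] at h
  rw [h, neg_neg]

lemma e_eq_e_d_h_add_e_h_d
    (hh'' : ∀ (n : ℤ) (x : C''.X n),
      x = C''.d (n - 1) n (h'' n (n - 1) x) + h'' (n + 1) n (C''.d n (n + 1) x))
    (n : ℤ) (b : C''.X n) :
    e n (n + 1) b = e n (n + 1) (C''.d (n - 1) n (h'' n (n - 1) b))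
      + e n (n + 1) (h'' (n + 1) n (C''.d n (n + 1) b)) :=
  (congrArg (e n (n + 1)) (hh'' n b)).trans (map_add _ _ _)

lemma proj_d_eq_d_proj
    (he : ∀ (i : ℤ) (x : C''.X i),
      C'.d (i + 1) (i + 2) (e i (i + 1) x) = - e (i + 1) (i + 2) (C''.d i (i + 1) x))
    (hh'' : ∀ (n : ℤ) (x : C''.X n),
      x = C''.d (n - 1) n (h'' n (n - 1) x) + h'' (n + 1) n (C''.d n (n + 1) x))
    (p' : C' ⟶ D) (n : ℤ) (a : C'.X n) (b : C''.X n) :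
    p'.f (n + 1) (C'.d n (n + 1) a + e n (n + 1) b)
        - p'.f (n + 1) (e n (n + 1) (h'' (n + 1) n (C''.d n (n + 1) b)))
      = D.d n (n + 1) (p'.f n a - p'.f n (e (n - 1) n (h'' n (n - 1) b))) := by
  rw [e_eq_e_d_h_add_e_h_d hh'', e_d_eq_neg_d_e he]
  simp only [map_add, map_sub, map_neg, p'.f_d_apply]
  abel

lemma proj_comp_incl_apply (p' : C' ⟶ D) (ι : D ⟶ C') (hpi : ι ≫ p' = 𝟙 D)
    (n : ℤ) (x : D.X n) :
    p'.f n (ι.f n x) - p'.f n (e (n - 1) n (h'' n (n - 1) (0 : C''.X n))) = x := by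
  rw [map_zero, map_zero, map_zero, sub_zero, ← ModuleCat.comp_apply,
    ← HomologicalComplex.comp_f, hpi, HomologicalComplex.id_f, ModuleCat.id_apply]

lemma homotopy_fst_component
    (he : ∀ (i : ℤ) (x : C''.X i),
      C'.d (i + 1) (i + 2) (e i (i + 1) x) = - e (i + 1) (i + 2) (C''.d i (i + 1) x))
    (p' : C' ⟶ D) (ι : D ⟶ C')
    (hh' : ∀ (n : ℤ) (x : C'.X n),
      x = ι.f n (p'.f n x) + C'.d (n - 1) n (h' n (n - 1) x)
        + h' (n + 1) n (C'.d n (n + 1) x))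
    (hh'' : ∀ (n : ℤ) (x : C''.X n),
      x = C''.d (n - 1) n (h'' n (n - 1) x) + h'' (n + 1) n (C''.d n (n + 1) x))
    (n : ℤ) (a : C'.X n) (b : C''.X n) :
      a = ι.f n (p'.f n a - p'.f n (e (n - 1) n (h'' n (n - 1) b)))
        + (C'.d (n - 1) n (h' n (n - 1) a - h' n (n - 1) (e (n - 1) n (h'' n (n - 1) b)))
            + e (n - 1) n (h'' n (n - 1) b))
        + (h' (n + 1) n (C'.d n (n + 1) a + e n (n + 1) b)
            - h' (n + 1) n (e n (n + 1) (h'' (n + 1) n (C''.d n (n + 1) b)))) := by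
  have hE := hh' n (e (n - 1) n (h'' n (n - 1) b))
  rw [e_eq_e_d_h_add_e_h_d hh'', e_d_eq_neg_d_e he]
  simp only [map_add, map_sub, map_neg] at hE ⊢
  linear_combination (norm := module) hh' n a - hE

end ExtensionByContractible

/-- Let `C'`, `C''` be cochain complexes, `e : C'' → C'` a degree `1` map with
`d' ∘ e = − e ∘ d''`, and let `C` be the complex with underlying graded module
`C' ⊕ C''` and differential `[[d', e], [0, d'']]`.  Given a chain map `p' : C' → D`,
a chain map `ι : D → C'` with `p' ∘ ι = id`, a homotopy `h'` with
`id = ι ∘ p' + d' ∘ h' + h' ∘ d'`, and a contracting homotopy `h''` of `C''`, then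
`p := (p', − p' ∘ e ∘ h'') : C → D` is a chain map with `p ∘ (ι, 0) = id`, and with
`h := [[h', − h' ∘ e ∘ h''], [0, h'']]` one has `id_C = (ι,0) ∘ p + d_C ∘ h + h ∘ d_C`;
in particular `(ι, 0) : D → C` exhibits `D` as a deformation retract of `C`. -/
theorem deformation_retract_of_extension_by_contractible
    {R : Type} [CommRing R]
    (C' C'' D : CochainComplex (ModuleCat R) ℤ)
    -- the degree 1 map `e` with `d' ∘ e = − e ∘ d''`
    (e : ∀ i j : ℤ, C''.X i →ₗ[R] C'.X j)
    (he : ∀ (i : ℤ) (x : C''.X i),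
      C'.d (i + 1) (i + 2) (e i (i + 1) x) = - e (i + 1) (i + 2) (C''.d i (i + 1) x))
    -- the chain maps `p'`, `ι` with `p' ∘ ι = id_D`
    (p' : C' ⟶ D) (ι : D ⟶ C') (hpi : ι ≫ p' = 𝟙 D)
    -- `h'` : `id_{C'} = ι ∘ p' + d' ∘ h' + h' ∘ d'`
    (h' : ∀ i j : ℤ, C'.X i →ₗ[R] C'.X j)
    (hh' : ∀ (n : ℤ) (x : C'.X n),
      x = ι.f n (p'.f n x) + C'.d (n - 1) n (h' n (n - 1) x)
        + h' (n + 1) n (C'.d n (n + 1) x))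
    -- `h''` : a contracting homotopy of `C''`
    (h'' : ∀ i j : ℤ, C''.X i →ₗ[R] C''.X j)
    (hh'' : ∀ (n : ℤ) (x : C''.X n),
      x = C''.d (n - 1) n (h'' n (n - 1) x) + h'' (n + 1) n (C''.d n (n + 1) x)) :
    -- (1) `p = (p', − p' ∘ e ∘ h'')` is a chain map `C → D`
    (∀ (n : ℤ) (a : C'.X n) (b : C''.X n),
      p'.f (n + 1) (C'.d n (n + 1) a + e n (n + 1) b)
          - p'.f (n + 1) (e n (n + 1) (h'' (n + 1) n (C''.d n (n + 1) b)))
        = D.d n (n + 1) (p'.f n a - p'.f n (e (n - 1) n (h'' n (n - 1) b))))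
    ∧ -- (2) `p ∘ (ι, 0) = id_D`
    (∀ (n : ℤ) (x : D.X n),
      p'.f n (ι.f n x) - p'.f n (e (n - 1) n (h'' n (n - 1) (0 : C''.X n))) = x)
    ∧ -- (3) first component of `id_C = (ι,0) ∘ p + d_C ∘ h + h ∘ d_C`
    (∀ (n : ℤ) (a : C'.X n) (b : C''.X n),
      a = ι.f n (p'.f n a - p'.f n (e (n - 1) n (h'' n (n - 1) b)))
        + (C'.d (n - 1) n (h' n (n - 1) a - h' n (n - 1) (e (n - 1) n (h'' n (n - 1) b)))
            + e (n - 1) n (h'' n (n - 1) b))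
        + (h' (n + 1) n (C'.d n (n + 1) a + e n (n + 1) b)
            - h' (n + 1) n (e n (n + 1) (h'' (n + 1) n (C''.d n (n + 1) b)))))
    ∧ -- (4) second component of `id_C = (ι,0) ∘ p + d_C ∘ h + h ∘ d_C`
    (∀ (n : ℤ) (b : C''.X n),
      b = C''.d (n - 1) n (h'' n (n - 1) b) + h'' (n + 1) n (C''.d n (n + 1) b)) :=
  ⟨proj_d_eq_d_proj he hh'' p', proj_comp_incl_apply p' ι hpi,
    homotopy_fst_component he p' ι hh' hh'', hh''⟩
end
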